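/- For the even-Poisson distribution q(k,λ), the exponential moment satisfies E_q[e^{ck}] = cosh(λ e^c)/cosh(λ) ≤ exp(λ(e^c − 1)) for all c ≥ 0. -/

import Mathlib

/-! Summing the even terms of the exponential series of `λ e^c` gives `cosh (λ e^c)`. For the
bound, `e^{λ(e^c - 1)} cosh λ = (e^{λ e^c} + e^{λ e^c - 2λ}) / 2`, and
`e^{-λ e^c} ≤ e^{λ e^c - 2λ}` because `λ (e^c - 1) ≥ 0`. -/

open Real

theorem hasSum_pow_even_div_factorial_mul_exp (x c : ℝ) :
    HasSum (fun k : ℕ => x ^ (2 * k) / ((2 * k).factorial : ℝ) * exp (c * (2 * k)))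
      (cosh (x * exp c)) := by
  convert hasSum_cosh (x * exp c) using 2 with k
  rw [mul_pow, ← exp_nat_mul]
  push_cast
  ring_nf

theorem cosh_mul_le_exp_mul_cosh {a b : ℝ} (ha : 0 ≤ a) (hb : 1 ≤ b) :
    cosh (a * b) ≤ exp (a * (b - 1)) * cosh a := by
  rw [cosh_eq, cosh_eq, mul_div_assoc', mul_add, ← exp_add, ← exp_add]
  gcongr
  · exact (by ring : a * b = a * (b - 1) + a).le
  · nlinarith

/-- Exponential moment of the even-Poisson distribution:
`E_q[e^{ck}] = cosh(λ e^c)/cosh λ ≤ exp(λ(e^c − 1))` for `c ≥ 0`. -/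
theorem evenPoisson_exp_moment (lam c : ℝ) (hlam : 0 < lam) (hc : 0 ≤ c) :
    (∑' k : ℕ, (lam ^ (2 * k) / (Nat.factorial (2 * k) : ℝ) / Real.cosh lam)
        * Real.exp (c * (2 * k))
      = Real.cosh (lam * Real.exp c) / Real.cosh lam) ∧
    Real.cosh (lam * Real.exp c) / Real.cosh lam
      ≤ Real.exp (lam * (Real.exp c - 1)) := by
  constructor
  · simp_rw [div_mul_eq_mul_div _ (cosh lam)]
    exact ((hasSum_pow_even_div_factorial_mul_exp lam c).div_const _).tsum_eq
  · rw [div_le_iff₀ (cosh_pos lam)]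
    exact cosh_mul_le_exp_mul_cosh hlam.le (one_le_exp hc)
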